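/- arXiv:2512.14638 — 2 statements merged into one kernel-verified Lean document; each statement's English description precedes it below -/
import Mathlib

section
/- Let N ≥ 5 and s be integers with 3 ≤ s ≤ binom(N,2) + 1, and let 𝓠 consist of ∅, [N], all 1-element subsets of [N], and all (N−1)-element subsets of [N]. Then 1 + 2(s−1)/(N(N−1)) ≤ L ≤ 1 + 4(s−1)/(N(N−1)), where L denotes the maximum of lu_N(𝓕) over all M_s-free families 𝓕 of subsets of [N] disjoint from 𝓠. -/
/-!
Lower bound: take all `2`-subsets together with `s - 1` of the `(N - 2)`-subsets. Since
`2 < N - 2`, every comparable pair has its top among the `s - 1` chosen large sets, so the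
family is `M_s`-free, and its Lubell value is `1 + (s - 1) / C(N, 2)`.

Upper bound: removing comparable pairs one at a time, an `M_s`-free family becomes an antichain
after deleting at most `2 (s - 1)` members. The antichain has Lubell value at most `1` by the
LYM inequality, and each deleted member, having size between `2` and `N - 2`, contributes at
most `1 / C(N, 2)`.
-/

/-- The Lubell function of a family of subsets of `[N]`. -/
def lubell (N : ℕ) (F : Finset (Finset (Fin N))) : ℚ :=
  ∑ A ∈ F, (1 : ℚ) / (N.choose A.card)

/-- The family `G` of subsets of `[N]` contains a copy of the matching `M_s`:
there are `2s` pairwise distinct members `A_1, …, A_s, B_1, …, B_s` of `G`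
with `A_i ⊆ B_i` for each `i`. -/
def ContainsMatching (N s : ℕ) (G : Finset (Finset (Fin N))) : Prop :=
  ∃ f : Fin s ⊕ Fin s → Finset (Fin N), Function.Injective f ∧
    (∀ x, f x ∈ G) ∧ ∀ i : Fin s, f (Sum.inl i) ⊆ f (Sum.inr i)

open Finset

namespace Nat

theorem choose_le_choose_of_le_of_le_half {n a b : ℕ} (hab : a ≤ b) (hb : b ≤ n / 2) :
    n.choose a ≤ n.choose b := by
  induction b, hab using Nat.le_induction with
  | base => exact le_rfl
  | succ b _ ih => exact (ih (by omega)).trans (choose_le_succ_of_lt_half_left (by omega))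

theorem choose_le_choose_of_le_of_le_sub {n a k : ℕ} (hak : a ≤ k) (hk : k ≤ n - a) :
    n.choose a ≤ n.choose k := by
  rcases le_or_gt k (n / 2) with h | h
  · exact choose_le_choose_of_le_of_le_half hak h
  · rw [← choose_symm (show k ≤ n by omega)]
    exact choose_le_choose_of_le_of_le_half (by omega) (by omega)

end Nat

section Lubell

variable {N : ℕ} {F G : Finset (Finset (Fin N))}

theorem lubell_union (h : Disjoint F G) : lubell N (F ∪ G) = lubell N F + lubell N G :=
  sum_union h

theorem lubell_le_one_of_isAntichain (hF : IsAntichain (· ⊆ ·) (F : Set (Finset (Fin N)))) :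
    lubell N F ≤ 1 := by
  simpa [lubell, one_div] using lubell_yamamoto_meshalkin_inequality_sum_inv_choose (𝕜 := ℚ) hF

theorem lubell_le_card_div {c : ℕ} (hc : 0 < c) (hF : ∀ A ∈ F, c ≤ N.choose #A) :
    lubell N F ≤ #F / c := by
  rw [div_eq_mul_one_div, ← nsmul_eq_mul]
  refine sum_le_card_nsmul F _ _ fun A hA => ?_
  gcongr
  exact_mod_cast hF A hA

theorem lubell_eq_card_div_of_forall_card_eq {k : ℕ} (hF : ∀ A ∈ F, #A = k) :
    lubell N F = #F / N.choose k := by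
  rw [lubell, sum_congr rfl fun A hA => by rw [hF A hA], sum_const, nsmul_eq_mul, mul_one_div]

end Lubell

section Matching

variable {N s : ℕ} {F : Finset (Finset (Fin N))}

theorem isAntichain_of_not_containsMatching_one (h : ¬ContainsMatching N 1 F) :
    IsAntichain (· ⊆ ·) (F : Set (Finset (Fin N))) := by
  intro A hA B hB hAB hsub
  exact h ⟨Sum.elim (fun _ => A) (fun _ => B),
    (Function.injective_of_subsingleton _).sumElim (Function.injective_of_subsingleton _)
      fun _ _ => hAB,
    by rintro (_ | _) <;> assumption, fun _ => hsub⟩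

theorem ContainsMatching.of_erase {A B : Finset (Fin N)} (hA : A ∈ F) (hB : B ∈ F)
    (hAB : A ≠ B) (hsub : A ⊆ B) (h : ContainsMatching N s ((F.erase A).erase B)) :
    ContainsMatching N (s + 1) F := by
  obtain ⟨f, hinj, hmem, hchain⟩ := h
  simp only [mem_erase] at hmem
  refine ⟨Sum.elim (Fin.cons A (f ∘ Sum.inl)) (Fin.cons B (f ∘ Sum.inr)), ?_, ?_, ?_⟩
  · refine Function.Injective.sumElim ?_ ?_ ?_
    · exact Fin.cons_injective_iff.2 ⟨by simpa [eq_comm] using fun i => (hmem _).2.1,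
        hinj.comp Sum.inl_injective⟩
    · exact Fin.cons_injective_iff.2 ⟨by simpa [eq_comm] using fun i => (hmem _).1,
        hinj.comp Sum.inr_injective⟩
    · intro i j
      cases i using Fin.cases <;> cases j using Fin.cases <;>
        simp [hAB, (hmem _).1, Ne.symm (hmem _).2.1, hinj.ne]
  · rintro (i | i) <;> cases i using Fin.cases <;> simp [hA, hB, (hmem _).2.2]
  · intro i
    cases i using Fin.cases
    · exact hsub
    · exact hchain _

theorem exists_isAntichain_sdiff_of_not_containsMatching (t : ℕ)
    (F : Finset (Finset (Fin N))) (h : ¬ContainsMatching N (t + 1) F) :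
    ∃ G ⊆ F, #G ≤ 2 * t ∧ IsAntichain (· ⊆ ·) ((F \ G : Finset _) : Set (Finset (Fin N))) := by
  induction t generalizing F with
  | zero =>
    exact ⟨∅, empty_subset _, by simp, by simpa using isAntichain_of_not_containsMatching_one h⟩
  | succ t ih =>
    by_cases hF : IsAntichain (· ⊆ ·) (F : Set (Finset (Fin N)))
    · exact ⟨∅, empty_subset _, by simp, by simpa using hF⟩
    obtain ⟨A, hA, B, hB, hAB, hsub⟩ : ∃ A ∈ F, ∃ B ∈ F, A ≠ B ∧ A ⊆ B := by
      simpa [IsAntichain, Set.Pairwise] using hF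
    obtain ⟨G, hGF, hG, hanti⟩ := ih _ fun hM => h (hM.of_erase hA hB hAB hsub)
    refine ⟨insert A (insert B G), insert_subset hA (insert_subset hB
      (hGF.trans ((erase_subset _ _).trans (erase_subset _ _)))), ?_, ?_⟩
    · have := card_insert_le A (insert B G)
      have := card_insert_le B G
      omega
    · convert hanti using 2
      ext
      simp only [mem_sdiff, mem_insert, mem_erase]
      tauto

theorem ContainsMatching.le_card_filter (h : ContainsMatching N s F) :
    s ≤ #{B ∈ F | ∃ A ∈ F, A ⊂ B} := by
  obtain ⟨f, hinj, hmem, hchain⟩ := h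
  simpa using card_le_card_of_injOn (s := univ) (fun i => f (Sum.inr i))
    (fun i _ => by
      simpa using ⟨hmem _, f (Sum.inl i), hmem _,
        ssubset_of_subset_of_ne (hchain i) (hinj.ne Sum.inl_ne_inr)⟩)
    (hinj.comp Sum.inr_injective).injOn

end Matching

theorem exists_not_containsMatching_lubell_eq {N t : ℕ} (hN : 5 ≤ N) (ht : t ≤ N.choose 2) :
    ∃ F : Finset (Finset (Fin N)), (∀ A ∈ F, #A = 2 ∨ #A = N - 2) ∧
      ¬ContainsMatching N (t + 1) F ∧ lubell N F = 1 + t / N.choose 2 := by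
  obtain ⟨T, hT, hTcard⟩ := exists_subset_card_eq
    (s := powersetCard (N - 2) (univ : Finset (Fin N))) (n := t)
    (by rwa [card_powersetCard, card_univ, Fintype.card_fin, Nat.choose_symm (by omega)])
  have hTsize : ∀ A ∈ T, #A = N - 2 := fun A hA => (mem_powersetCard.1 (hT hA)).2
  set P := powersetCard 2 (univ : Finset (Fin N))
  have hPsize : ∀ A ∈ P, #A = 2 := fun A hA => (mem_powersetCard.1 hA).2
  have hsize : ∀ A ∈ P ∪ T, #A = 2 ∨ #A = N - 2 := by
    simp only [mem_union]
    rintro A (hA | hA)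
    exacts [Or.inl (hPsize A hA), Or.inr (hTsize A hA)]
  refine ⟨P ∪ T, hsize, fun hM => ?_, ?_⟩
  · have htops : {B ∈ P ∪ T | ∃ A ∈ P ∪ T, A ⊂ B} ⊆ T := by
      intro B hB
      obtain ⟨hBPT, A, hA, hAB⟩ := mem_filter.1 hB
      have := card_lt_card hAB
      rcases mem_union.1 hBPT with hBP | hBT
      · have := hPsize B hBP
        have := hsize A hA
        omega
      · exact hBT
    have := (card_le_card htops).trans_lt' hM.le_card_filter
    omega
  · have hdisj : Disjoint P T := disjoint_left.2 fun A hAP hAT => by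
      have := hPsize A hAP
      have := hTsize A hAT
      omega
    have hC : (N.choose 2 : ℚ) ≠ 0 := by exact_mod_cast (Nat.choose_pos (by omega)).ne'
    rw [lubell_union hdisj, lubell_eq_card_div_of_forall_card_eq hPsize,
      lubell_eq_card_div_of_forall_card_eq hTsize, card_powersetCard, card_univ,
      Fintype.card_fin, div_self hC, hTcard, Nat.choose_symm (by omega)]

theorem lubell_le_of_not_containsMatching {N t : ℕ} {F : Finset (Finset (Fin N))}
    (hN : 2 ≤ N) (hF : ∀ A ∈ F, 2 ≤ #A ∧ #A ≤ N - 2) (hM : ¬ContainsMatching N (t + 1) F) :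
    lubell N F ≤ 1 + 2 * t / N.choose 2 := by
  obtain ⟨G, hGF, hG, hanti⟩ := exists_isAntichain_sdiff_of_not_containsMatching t F hM
  have hGsize : ∀ A ∈ G, N.choose 2 ≤ N.choose #A := fun A hA =>
    Nat.choose_le_choose_of_le_of_le_sub (hF A (hGF hA)).1 (hF A (hGF hA)).2
  calc lubell N F = lubell N (F \ G) + lubell N G := by
        rw [← lubell_union disjoint_sdiff_self_left, sdiff_union_of_subset hGF]
    _ ≤ 1 + #G / N.choose 2 :=
        add_le_add (lubell_le_one_of_isAntichain hanti)
          (lubell_le_card_div (Nat.choose_pos hN) hGsize)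
    _ ≤ 1 + 2 * t / N.choose 2 := by
        gcongr
        exact_mod_cast hG

theorem Finset.two_le_card_and_card_le_sub_two_iff {N : ℕ} (A : Finset (Fin N)) :
    2 ≤ #A ∧ #A ≤ N - 2 ↔ A ≠ ∅ ∧ A ≠ univ ∧ #A ≠ 1 ∧ #A ≠ N - 1 := by
  have hA : #A ≤ N := by simpa using card_le_univ A
  rw [Ne, ← card_eq_zero, Ne, ← card_eq_iff_eq_univ, Fintype.card_fin]
  omega

theorem stmt3 (N s : ℕ) (hN : 5 ≤ N) (hs : 3 ≤ s) (hs' : s ≤ N.choose 2 + 1)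
    (L : ℚ)
    (hL : IsGreatest {x : ℚ | ∃ F : Finset (Finset (Fin N)),
        (∀ A ∈ F, A ≠ ∅ ∧ A ≠ Finset.univ ∧ A.card ≠ 1 ∧ A.card ≠ N - 1) ∧
        ¬ ContainsMatching N s F ∧ lubell N F = x} L) :
    1 + 2 * ((s : ℚ) - 1) / ((N : ℚ) * ((N : ℚ) - 1)) ≤ L ∧
      L ≤ 1 + 4 * ((s : ℚ) - 1) / ((N : ℚ) * ((N : ℚ) - 1)) := by
  obtain ⟨t, rfl⟩ : ∃ t, s = t + 1 := ⟨s - 1, by omega⟩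
  have hC : (N.choose 2 : ℚ) = N * (N - 1) / 2 := Nat.cast_choose_two ℚ N
  have hN1 : (N : ℚ) - 1 ≠ 0 := by
    have : (5 : ℚ) ≤ N := by exact_mod_cast hN
    linarith
  push_cast
  simp only [add_sub_cancel_right]
  constructor
  · obtain ⟨F, hF, hM, hlub⟩ := exists_not_containsMatching_lubell_eq hN (by omega : t ≤ N.choose 2)
    refine le_of_eq_of_le ?_ (hL.2 ⟨F, fun A hA => (two_le_card_and_card_le_sub_two_iff A).1
      (by rcases hF A hA with h | h <;> omega), hM, hlub⟩)
    rw [hC]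
    field_simp
  · obtain ⟨F, hF, hM, rfl⟩ := hL.1
    refine (lubell_le_of_not_containsMatching (by omega)
      (fun A hA => (two_le_card_and_card_le_sub_two_iff A).2 (hF A hA)) hM).trans_eq ?_
    rw [hC]
    field_simp
    ring
end

section
/- Let t ≥ 3 and let m, n, N be integers with t−1 ≤ n, 2 ≤ m ≤ N, 2 ≤ n ≤ N, and suppose that e(n,N) · 2^{−h_n(t)} < 1. Then c_t(m, n, N) ≤ (e(m,N) · 2^{−h_m(t)}) / (1 − e(n,N) · 2^{−h_n(t)}). -/
/-- The set of `t`-chains in the Boolean lattice `B_n`: families of `t`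
pairwise comparable (under inclusion) subsets of `[n]`. -/
def boolChains (n t : ℕ) : Finset (Finset (Finset (Fin n))) :=
  Finset.univ.filter (fun C => C.card = t ∧ ∀ A ∈ C, ∀ B ∈ C, A ⊆ B ∨ B ⊆ A)

/-- `f` is a strong embedding of `B_m` into `B_N`. -/
def IsStrongEmb (m N : ℕ) (f : Finset (Fin m) → Finset (Fin N)) : Prop :=
  ∀ S T : Finset (Fin m), S ⊆ T ↔ f S ⊆ f T

/-- `e(m, N)`: the number of strong embeddings of `B_m` into `B_N`. -/
noncomputable def embCount (m N : ℕ) : ℕ :=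
  Nat.card {f : Finset (Fin m) → Finset (Fin N) // IsStrongEmb m N f}

/-- A strong embedding `f` of `B_m` into `B_N` is embedded into the set `T`
of `t`-chains of `B_N` if the image of every `t`-chain of `B_m` belongs
to `T`. -/
def EmbeddedInto (t m N : ℕ) (T : Finset (Finset (Finset (Fin N))))
    (f : Finset (Fin m) → Finset (Fin N)) : Prop :=
  ∀ C ∈ boolChains m t, C.image f ∈ T

/-- `e(m, T)`: the number of strong embeddings of `B_m` embedded into `T`. -/
noncomputable def embIntoCount (t m N : ℕ)
    (T : Finset (Finset (Finset (Fin N)))) : ℕ :=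
  Nat.card {f : Finset (Fin m) → Finset (Fin N) //
    IsStrongEmb m N f ∧ EmbeddedInto t m N T f}

/-!
Union bound plus averaging. Write `K` for the number of `t`-chains of `B_N`. A strong embedding of
`B_n` is embedded into `𝓣` only if `𝓣` contains its `h_n(t)` image chains, which happens for
`2^(K - h_n(t))` of the `2^K` families `𝓣`; hence at least `2^K (1 - e(n,N) 2^(-h_n(t)))` families
do not contain `B_n`. Dually, each strong embedding of `B_m` is embedded into `𝓣̄` for exactly
`2^(K - h_m(t))` families, so `e(m, 𝓣̄)` sums to `e(m,N) 2^(K - h_m(t))` over all `𝓣`. The minimum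
over the good families is at most their average, so `c ≤ 2^(-h_m(t)) / (1 - e(n,N) 2^(-h_n(t)))`.
-/

open Finset

section StrongEmbeddings

variable {t m N : ℕ} {f : Finset (Fin m) → Finset (Fin N)}

theorem IsStrongEmb.injective (hf : IsStrongEmb m N f) : Function.Injective f :=
  fun S T h => subset_antisymm ((hf S T).2 h.le) ((hf T S).2 h.ge)

theorem mem_boolChains {C : Finset (Finset (Fin m))} :
    C ∈ boolChains m t ↔ #C = t ∧ ∀ A ∈ C, ∀ B ∈ C, A ⊆ B ∨ B ⊆ A := by
  simp [boolChains]

theorem IsStrongEmb.image_mem_boolChains (hf : IsStrongEmb m N f)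
    {C : Finset (Finset (Fin m))} (hC : C ∈ boolChains m t) : C.image f ∈ boolChains N t := by
  rw [mem_boolChains] at hC ⊢
  refine ⟨by rw [card_image_of_injective _ hf.injective, hC.1], ?_⟩
  simp only [mem_image]
  rintro _ ⟨A, hA, rfl⟩ _ ⟨B, hB, rfl⟩
  exact (hC.2 A hA B hB).imp (hf A B).1 (hf B A).1

variable (t) in
def chainImage (f : Finset (Fin m) → Finset (Fin N)) : Finset (Finset (Finset (Fin N))) :=
  (boolChains m t).image (image f)

theorem embeddedInto_iff_chainImage_subset {T : Finset (Finset (Finset (Fin N)))} :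
    EmbeddedInto t m N T f ↔ chainImage t f ⊆ T := by
  simp [EmbeddedInto, chainImage, image_subset_iff]

theorem IsStrongEmb.chainImage_subset (hf : IsStrongEmb m N f) :
    chainImage t f ⊆ boolChains N t :=
  embeddedInto_iff_chainImage_subset.1 fun _ hC => hf.image_mem_boolChains hC

theorem IsStrongEmb.card_chainImage (hf : IsStrongEmb m N f) :
    #(chainImage t f) = #(boolChains m t) :=
  card_image_of_injective _ (image_injective hf.injective)

theorem IsStrongEmb.embeddedInto_sdiff_iff (hf : IsStrongEmb m N f)
    {T : Finset (Finset (Finset (Fin N)))} :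
    EmbeddedInto t m N (boolChains N t \ T) f ↔ Disjoint (chainImage t f) T := by
  rw [embeddedInto_iff_chainImage_subset, subset_sdiff, and_iff_right hf.chainImage_subset]

theorem one_le_embCount (h : m ≤ N) : 1 ≤ embCount m N := by
  rw [embCount, Nat.one_le_iff_ne_zero, Nat.card_ne_zero]
  exact ⟨⟨⟨_, fun S T => (image_subset_image_iff (Fin.castLE_injective h)).symm⟩⟩, inferInstance⟩

end StrongEmbeddings

theorem card_filter_powerset_disjoint {α : Type*} [DecidableEq α] {s d : Finset α}
    (h : d ⊆ s) : #{u ∈ s.powerset | Disjoint d u} = 2 ^ (#s - #d) := by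
  rw [← card_sdiff_of_subset h, ← card_powerset]
  congr 1
  ext u
  simp only [mem_filter, mem_powerset, subset_sdiff, disjoint_comm]

theorem card_filter_powerset_superset {α : Type*} [DecidableEq α] {s d : Finset α}
    (h : d ⊆ s) : #{u ∈ s.powerset | d ⊆ u} = 2 ^ (#s - #d) := by
  rw [← Icc_eq_filter_powerset, card_Icc_finset h]

theorem cast_two_pow_sub {a b : ℕ} (h : b ≤ a) :
    ((2 ^ (a - b) : ℕ) : ℝ) = 2 ^ a * 2 ^ (-(b : ℤ)) := by
  rw [Nat.cast_pow, Nat.cast_ofNat, pow_sub₀ _ two_ne_zero h, zpow_neg, zpow_natCast]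

section DoubleCounting

open scoped Classical

variable (t m n N : ℕ)

def ContainsBoolLattice (T : Finset (Finset (Finset (Fin N)))) : Prop :=
  ∃ f : Finset (Fin n) → Finset (Fin N), IsStrongEmb n N f ∧ EmbeddedInto t n N T f

theorem embCount_eq_card : embCount m N = #{f | IsStrongEmb m N f} := by
  rw [embCount, Nat.card_eq_fintype_card, Fintype.card_subtype]

theorem embIntoCount_eq_card (T : Finset (Finset (Finset (Fin N)))) :
    embIntoCount t m N T = #{f | IsStrongEmb m N f ∧ EmbeddedInto t m N T f} := by
  rw [embIntoCount, Nat.card_eq_fintype_card, Fintype.card_subtype]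

theorem sum_embIntoCount_sdiff :
    ∑ T ∈ (boolChains N t).powerset, (embIntoCount t m N (boolChains N t \ T) : ℝ) =
      embCount m N * (2 ^ #(boolChains N t) * 2 ^ (-(#(boolChains m t) : ℤ))) := by
  have hswap : ∑ T ∈ (boolChains N t).powerset, embIntoCount t m N (boolChains N t \ T) =
      ∑ f ∈ {f | IsStrongEmb m N f},
        #{T ∈ (boolChains N t).powerset | Disjoint (chainImage t f) T} := by
    simp only [embIntoCount_eq_card, ← filter_filter, card_filter]
    rw [sum_comm]
    refine sum_congr rfl fun f hf => sum_congr rfl fun T _ => ?_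
    simp only [(mem_filter.1 hf).2.embeddedInto_sdiff_iff]
  rw [← Nat.cast_sum, hswap, Nat.cast_sum, embCount_eq_card, ← nsmul_eq_mul,
    ← sum_const]
  refine sum_congr rfl fun f hf => ?_
  have hf := (mem_filter.1 hf).2
  rw [card_filter_powerset_disjoint hf.chainImage_subset, ← hf.card_chainImage,
    cast_two_pow_sub (card_le_card hf.chainImage_subset)]

theorem card_filter_containsBoolLattice_le :
    (#{T ∈ (boolChains N t).powerset | ContainsBoolLattice t n N T} : ℝ) ≤
      embCount n N * (2 ^ #(boolChains N t) * 2 ^ (-(#(boolChains n t) : ℤ))) := by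
  have hunion : {T ∈ (boolChains N t).powerset | ContainsBoolLattice t n N T} ⊆
      ({f | IsStrongEmb n N f} : Finset _).biUnion
        fun f => {T ∈ (boolChains N t).powerset | chainImage t f ⊆ T} := by
    intro T hT
    obtain ⟨hT, f, hf, hemb⟩ := mem_filter.1 hT
    exact mem_biUnion.2 ⟨f, mem_filter.2 ⟨mem_univ f, hf⟩,
      mem_filter.2 ⟨hT, embeddedInto_iff_chainImage_subset.1 hemb⟩⟩
  calc (#{T ∈ (boolChains N t).powerset | ContainsBoolLattice t n N T} : ℝ)
      ≤ ∑ f ∈ {f | IsStrongEmb n N f},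
          (#{T ∈ (boolChains N t).powerset | chainImage t f ⊆ T} : ℝ) := by
        exact_mod_cast (card_le_card hunion).trans card_biUnion_le
    _ = _ := by
        rw [embCount_eq_card, ← nsmul_eq_mul, ← sum_const]
        refine sum_congr rfl fun f hf => ?_
        have hf := (mem_filter.1 hf).2
        rw [card_filter_powerset_superset hf.chainImage_subset, ← hf.card_chainImage,
          cast_two_pow_sub (card_le_card hf.chainImage_subset)]

end DoubleCounting

theorem le_two_zpow_div_of_forall_le (t m n N : ℕ) (he : 0 < embCount m N)
    (hsmall : (embCount n N : ℝ) * 2 ^ (-(#(boolChains n t) : ℤ)) < 1) {c : ℝ} (hc : 0 ≤ c)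
    (hle : ∀ T ⊆ boolChains N t, ¬ ContainsBoolLattice t n N T →
      c ≤ embIntoCount t m N (boolChains N t \ T) / embCount m N) :
    c ≤ 2 ^ (-(#(boolChains m t) : ℤ)) /
      (1 - embCount n N * 2 ^ (-(#(boolChains n t) : ℤ))) := by
  classical
  set 𝒞 := boolChains N t
  set p : ℝ := embCount n N * 2 ^ (-(#(boolChains n t) : ℤ))
  set good := {T ∈ 𝒞.powerset | ¬ ContainsBoolLattice t n N T}
  have he : (0 : ℝ) < embCount m N := Nat.cast_pos.2 he
  have hgood : 2 ^ #𝒞 * (1 - p) ≤ #good := by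
    have hsplit : (#{T ∈ 𝒞.powerset | ContainsBoolLattice t n N T} : ℝ) + #good = 2 ^ #𝒞 := by
      exact_mod_cast (card_filter_add_card_filter_not _).trans (card_powerset 𝒞)
    linarith [card_filter_containsBoolLattice_le t n N]
  have hsum : c * embCount m N * #good ≤
      embCount m N * (2 ^ #𝒞 * 2 ^ (-(#(boolChains m t) : ℤ))) :=
    calc c * embCount m N * #good = ∑ _T ∈ good, c * embCount m N := by
          rw [sum_const, nsmul_eq_mul, mul_comm]
      _ ≤ ∑ T ∈ good, (embIntoCount t m N (𝒞 \ T) : ℝ) := sum_le_sum fun T hT => by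
          obtain ⟨hT, hgood⟩ := mem_filter.1 hT
          exact (le_div_iff₀ he).1 (hle T (mem_powerset.1 hT) hgood)
      _ ≤ ∑ T ∈ 𝒞.powerset, (embIntoCount t m N (𝒞 \ T) : ℝ) :=
          sum_le_sum_of_subset_of_nonneg (filter_subset _ _) fun _ _ _ => by positivity
      _ = _ := sum_embIntoCount_sdiff t m N
  have h2K : (0 : ℝ) < 2 ^ #𝒞 := by positivity
  rw [le_div_iff₀ (sub_pos.2 hsmall)]
  refine le_of_mul_le_mul_left ?_ (mul_pos he h2K)
  calc embCount m N * 2 ^ #𝒞 * (c * (1 - p)) = c * (2 ^ #𝒞 * (1 - p)) * embCount m N := by ring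
    _ ≤ c * #good * embCount m N := by gcongr
    _ ≤ _ := by linarith

theorem stmt9_general (t m n N : ℕ) (hmN : m ≤ N)
    (hsmall : (embCount n N : ℝ) * (2 : ℝ) ^ (-((boolChains n t).card : ℤ)) < 1)
    (c : ℝ)
    (hc : IsLeast {x : ℝ | ∃ T : Finset (Finset (Finset (Fin N))),
        T ⊆ boolChains N t ∧
        (¬ ∃ f : Finset (Fin n) → Finset (Fin N),
            IsStrongEmb n N f ∧ EmbeddedInto t n N T f) ∧
        x = (embIntoCount t m N (boolChains N t \ T) : ℝ) / (embCount m N : ℝ)} c) :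
    c ≤ (embCount m N : ℝ) * (2 : ℝ) ^ (-((boolChains m t).card : ℤ)) /
        (1 - (embCount n N : ℝ) * (2 : ℝ) ^ (-((boolChains n t).card : ℤ))) := by
  obtain ⟨⟨T, -, -, rfl⟩, hle⟩ := hc
  have he := one_le_embCount hmN
  refine (le_two_zpow_div_of_forall_le t m n N he hsmall (by positivity)
    fun T hT hT' => hle ⟨T, hT, hT', rfl⟩).trans ?_
  gcongr
  exact le_mul_of_one_le_left (by positivity) (by exact_mod_cast he)

theorem stmt9 (t m n N : ℕ) (ht : 3 ≤ t) (hnt : t - 1 ≤ n)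
    (hm : 2 ≤ m) (hmN : m ≤ N) (hn : 2 ≤ n) (hnN : n ≤ N)
    (hsmall : (embCount n N : ℝ) * (2 : ℝ) ^ (-((boolChains n t).card : ℤ)) < 1)
    (c : ℝ)
    (hc : IsLeast {x : ℝ | ∃ T : Finset (Finset (Finset (Fin N))),
        T ⊆ boolChains N t ∧
        (¬ ∃ f : Finset (Fin n) → Finset (Fin N),
            IsStrongEmb n N f ∧ EmbeddedInto t n N T f) ∧
        x = (embIntoCount t m N (boolChains N t \ T) : ℝ) / (embCount m N : ℝ)} c) :
    c ≤ (embCount m N : ℝ) * (2 : ℝ) ^ (-((boolChains m t).card : ℤ)) /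
        (1 - (embCount n N : ℝ) * (2 : ℝ) ^ (-((boolChains n t).card : ℤ))) :=
  stmt9_general t m n N hmN hsmall c hc
end
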